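/- Let T₁ and T₂ be subspaces of a finite-dimensional real inner product space E, set M := P_{T₁} ∘ P_{T₂} + P_{T₁^⊥} ∘ P_{T₂^⊥}, fix λ ∈ (0, 2), set M_λ := (1 − λ)·Id + λ·M, and let M^∞ be the orthogonal projection onto (T₁ ∩ T₂) ⊕ (T₁^⊥ ∩ T₂^⊥). Let c_F := c_F(T₂, T₁) be the Friedrichs cosine of T₂ and T₁ and ρ := √((1 − λ)² + λ(2 − λ)·c_F²). Suppose (z_k) is a sequence in E, z* ∈ E and K ∈ ℕ are such that z_{k+1} − z* = (M_λ − M^∞)(z_k − z*) for all k ≥ K. Then ρ < 1 and for all k ≥ K, ‖z_k − z*‖ ≤ ρ^{k−K}·‖z_K − z*‖. -/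

import Mathlib

open RealInnerProductSpace

/-- The orthogonal projection onto a subspace, as a continuous linear endomorphism. -/
noncomputable def projCLM {E : Type*} [NormedAddCommGroup E] [InnerProductSpace ℝ E]
    [FiniteDimensional ℝ E] (T : Submodule ℝ E) : E →L[ℝ] E :=
  T.subtypeL.comp (T.orthogonalProjection)

/-- The Friedrichs cosine of two subspaces `T₁`, `T₂`: the supremum of `⟪u, v⟫` over unit
vectors `u ∈ T₁ ∩ W^⊥`, `v ∈ T₂ ∩ W^⊥`, where `W = T₁ ⊓ T₂` (`sSup ∅ = 0` in `ℝ`). -/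
noncomputable def friedrichsCos {E : Type*} [NormedAddCommGroup E] [InnerProductSpace ℝ E]
    (T₁ T₂ : Submodule ℝ E) : ℝ :=
  sSup { r : ℝ | ∃ u v : E, u ∈ T₁ ⊓ (T₁ ⊓ T₂)ᗮ ∧ v ∈ T₂ ⊓ (T₁ ⊓ T₂)ᗮ ∧
    ‖u‖ = 1 ∧ ‖v‖ = 1 ∧ r = ⟪u, v⟫ }

/-!
Let `F = (T₁ ⊓ T₂) ⊔ (T₁ᗮ ⊓ T₂ᗮ)`. The operator `M` fixes `F` and satisfies `⟪x, M x⟫ = ‖M x‖²`,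
so for `v = p + q` with `p ∈ F`, `q ∈ Fᗮ` we get `(M_λ - M^∞) v = (1 - λ) q + λ M q`, of squared
norm `(1 - λ)² ‖q‖² + λ (2 - λ) ‖M q‖²`. On `Fᗮ` the two orthogonal summands of `M q` are bounded
by `c_F(T₁, T₂) ‖P_{T₂} q‖` and `c_F(T₁ᗮ, T₂ᗮ) ‖P_{T₂ᗮ} q‖`, and `c_F(T₁ᗮ, T₂ᗮ) ≤ c_F(T₁, T₂)`:
an extremal pair `(u, v)` for the complements, with cosine `c`, produces the pair
`(c u - v, u - c v)` in `T₁ × T₂` with the same cosine. Hence `M_λ - M^∞` contracts by `ρ`, and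
`ρ < 1` because in finite dimension the supremum defining `c_F` is attained, so `c_F < 1`.
-/

namespace Submodule

variable {E : Type*} [NormedAddCommGroup E] [InnerProductSpace ℝ E]

theorem real_inner_self_starProjection (K : Submodule ℝ E) [K.HasOrthogonalProjection] (x : E) :
    ⟪x, K.starProjection x⟫ = ‖K.starProjection x‖ ^ 2 := by
  simpa [real_inner_comm] using K.re_inner_starProjection_eq_normSq x

theorem starProjection_mem_orthogonal_of_le {U K : Submodule ℝ E} [K.HasOrthogonalProjection]
    (h : U ≤ K) {x : E} (hx : x ∈ Uᗮ) : K.starProjection x ∈ Uᗮ := by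
  intro w hw
  rw [← inner_starProjection_left_eq_right, starProjection_eq_self_iff.2 (h hw)]
  exact hx w hw

end Submodule

section UnitVectors

variable {F : Type*} [NormedAddCommGroup F] [InnerProductSpace ℝ F] {u v : F} {c : ℝ}

theorem inner_smul_sub_sub_smul (hu : ‖u‖ = 1) (hv : ‖v‖ = 1) (huv : ⟪u, v⟫ = c) :
    ⟪c • u - v, u - c • v⟫ = c * (1 - c ^ 2) := by
  have hvu : ⟪v, u⟫ = c := by rw [real_inner_comm, huv]
  simp only [inner_sub_left, inner_sub_right, real_inner_smul_left, real_inner_smul_right,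
    real_inner_self_eq_norm_sq, hu, hv, huv, hvu]
  ring

theorem norm_smul_sub_mul_norm_sub_smul (hu : ‖u‖ = 1) (hv : ‖v‖ = 1) (huv : ⟪u, v⟫ = c) :
    ‖c • u - v‖ * ‖u - c • v‖ = 1 - c ^ 2 := by
  have ha : ‖c • u - v‖ ^ 2 = 1 - c ^ 2 := by
    rw [norm_sub_sq_real, norm_smul, real_inner_smul_left, mul_pow, Real.norm_eq_abs, sq_abs,
      hu, hv, huv]
    ring
  have hb : ‖u - c • v‖ ^ 2 = 1 - c ^ 2 := by
    rw [norm_sub_sq_real, norm_smul, real_inner_smul_right, mul_pow, Real.norm_eq_abs, sq_abs,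
      hu, hv, huv]
    ring
  rw [← hb, sq, (pow_left_inj₀ (norm_nonneg _) (norm_nonneg _) two_ne_zero).1 (ha.trans hb.symm)]

end UnitVectors

section FriedrichsCos

variable {E : Type*} [NormedAddCommGroup E] [InnerProductSpace ℝ E]

def friedrichsCosSet (A B : Submodule ℝ E) : Set ℝ :=
  { r : ℝ | ∃ u v : E, u ∈ A ⊓ (A ⊓ B)ᗮ ∧ v ∈ B ⊓ (A ⊓ B)ᗮ ∧
    ‖u‖ = 1 ∧ ‖v‖ = 1 ∧ r = ⟪u, v⟫ }

theorem friedrichsCos_eq_sSup (A B : Submodule ℝ E) :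
    friedrichsCos A B = sSup (friedrichsCosSet A B) := rfl

theorem friedrichsCosSet_comm (A B : Submodule ℝ E) :
    friedrichsCosSet A B = friedrichsCosSet B A := by
  have key : ∀ A B : Submodule ℝ E, friedrichsCosSet A B ⊆ friedrichsCosSet B A := by
    rintro A B r ⟨u, v, hu, hv, hu1, hv1, rfl⟩
    rw [inf_comm A B] at hu hv
    exact ⟨v, u, hv, hu, hv1, hu1, real_inner_comm v u⟩
  exact (key A B).antisymm (key B A)

theorem friedrichsCos_comm (A B : Submodule ℝ E) : friedrichsCos A B = friedrichsCos B A := by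
  rw [friedrichsCos_eq_sSup, friedrichsCos_eq_sSup, friedrichsCosSet_comm]

theorem bddAbove_friedrichsCosSet (A B : Submodule ℝ E) : BddAbove (friedrichsCosSet A B) := by
  refine ⟨1, ?_⟩
  rintro r ⟨u, v, -, -, hu1, hv1, rfl⟩
  simpa [hu1, hv1] using real_inner_le_norm u v

theorem friedrichsCos_nonneg (A B : Submodule ℝ E) : 0 ≤ friedrichsCos A B := by
  rcases (friedrichsCosSet A B).eq_empty_or_nonempty with h | ⟨_, u, v, hu, hv, hu1, hv1, rfl⟩
  · rw [friedrichsCos_eq_sSup, h, Real.sSup_empty]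
  · have hneg : -⟪u, v⟫ ∈ friedrichsCosSet A B :=
      ⟨u, -v, hu, neg_mem hv, hu1, by rwa [norm_neg], by rw [inner_neg_right]⟩
    have h₁ := le_csSup (bddAbove_friedrichsCosSet A B) hneg
    have h₂ := le_csSup (bddAbove_friedrichsCosSet A B) ⟨u, v, hu, hv, hu1, hv1, rfl⟩
    rw [friedrichsCos_eq_sSup]
    linarith

theorem inner_le_friedrichsCos_mul {A B : Submodule ℝ E} {u v : E}
    (hu : u ∈ A ⊓ (A ⊓ B)ᗮ) (hv : v ∈ B ⊓ (A ⊓ B)ᗮ) :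
    ⟪u, v⟫ ≤ friedrichsCos A B * (‖u‖ * ‖v‖) := by
  rcases eq_or_ne u 0 with rfl | hu0
  · simp
  rcases eq_or_ne v 0 with rfl | hv0
  · simp
  have hnu : 0 < ‖u‖ := norm_pos_iff.2 hu0
  have hnv : 0 < ‖v‖ := norm_pos_iff.2 hv0
  have hmem : ⟪‖u‖⁻¹ • u, ‖v‖⁻¹ • v⟫ ∈ friedrichsCosSet A B :=
    ⟨_, _, Submodule.smul_mem _ _ hu, Submodule.smul_mem _ _ hv, norm_smul_inv_norm hu0,
      norm_smul_inv_norm hv0, rfl⟩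
  have hle := le_csSup (bddAbove_friedrichsCosSet A B) hmem
  rw [real_inner_smul_left, real_inner_smul_right, ← friedrichsCos_eq_sSup] at hle
  have := mul_le_mul_of_nonneg_left hle (mul_pos hnu hnv).le
  field_simp at this
  linarith

theorem norm_starProjection_le_friedrichsCos_mul {A B : Submodule ℝ E}
    [A.HasOrthogonalProjection] {v : E} (hv : v ∈ B ⊓ (A ⊓ B)ᗮ) :
    ‖A.starProjection v‖ ≤ friedrichsCos A B * ‖v‖ := by
  set u := A.starProjection v
  have hu : u ∈ A ⊓ (A ⊓ B)ᗮ :=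
    ⟨A.starProjection_apply_mem v, Submodule.starProjection_mem_orthogonal_of_le inf_le_left hv.2⟩
  have hsq : ‖u‖ ^ 2 ≤ friedrichsCos A B * ‖v‖ * ‖u‖ := by
    rw [← A.real_inner_self_starProjection, real_inner_comm, mul_right_comm, mul_assoc]
    exact inner_le_friedrichsCos_mul hu hv
  rcases (norm_nonneg u).eq_or_lt with h | h
  · rw [← h]; exact mul_nonneg (friedrichsCos_nonneg A B) (norm_nonneg v)
  · nlinarith

theorem starProjection_eq_friedrichsCos_smul {A B : Submodule ℝ E} [B.HasOrthogonalProjection]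
    {u v : E} (hu : u ∈ A ⊓ (A ⊓ B)ᗮ) (hv : v ∈ B ⊓ (A ⊓ B)ᗮ) (hu1 : ‖u‖ = 1) (hv1 : ‖v‖ = 1)
    (huv : ⟪u, v⟫ = friedrichsCos A B) : B.starProjection u = friedrichsCos A B • v := by
  set p := B.starProjection u
  have hp_le : ‖p‖ ≤ friedrichsCos A B := by
    rw [inf_comm A B] at hu
    simpa [hu1, friedrichsCos_comm B A] using norm_starProjection_le_friedrichsCos_mul hu
  have hpv : ⟪p, v⟫ = friedrichsCos A B := by
    rw [B.inner_starProjection_left_eq_right, B.starProjection_eq_self_iff.2 hv.1, huv]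
  have hp_eq : ‖p‖ = friedrichsCos A B :=
    hp_le.antisymm (by simpa [hv1, hpv] using real_inner_le_norm p v)
  have hCS : ⟪p, v⟫ = ‖p‖ * ‖v‖ := by rw [hpv, hp_eq, hv1, mul_one]
  simpa [hv1, hp_eq] using inner_eq_norm_mul_iff_real.1 hCS

end FriedrichsCos

section FriedrichsCosFiniteDimensional

variable {E : Type*} [NormedAddCommGroup E] [InnerProductSpace ℝ E] [FiniteDimensional ℝ E]

theorem isCompact_friedrichsCosSet (A B : Submodule ℝ E) : IsCompact (friedrichsCosSet A B) := by
  have hS : ∀ S : Submodule ℝ E, IsCompact ((S : Set E) ∩ Metric.sphere 0 1) := fun S =>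
    (isCompact_sphere 0 1).inter_left S.closed_of_finiteDimensional
  have : friedrichsCosSet A B = (fun p : E × E => ⟪p.1, p.2⟫) ''
      ((↑(A ⊓ (A ⊓ B)ᗮ) ∩ Metric.sphere (0 : E) 1) ×ˢ
        (↑(B ⊓ (A ⊓ B)ᗮ) ∩ Metric.sphere (0 : E) 1)) := by
    ext r
    simp only [friedrichsCosSet, Set.mem_image, Set.mem_prod, Set.mem_inter_iff,
      mem_sphere_zero_iff_norm, SetLike.mem_coe, Prod.exists]
    constructor
    · rintro ⟨u, v, hu, hv, hu1, hv1, rfl⟩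
      exact ⟨u, v, ⟨⟨hu, hu1⟩, hv, hv1⟩, rfl⟩
    · rintro ⟨u, v, ⟨⟨hu, hu1⟩, hv, hv1⟩, rfl⟩
      exact ⟨u, v, hu, hv, hu1, hv1, rfl⟩
  rw [this]
  exact ((hS _).prod (hS _)).image continuous_inner

theorem friedrichsCos_mem_friedrichsCosSet {A B : Submodule ℝ E}
    (h : (friedrichsCosSet A B).Nonempty) : friedrichsCos A B ∈ friedrichsCosSet A B :=
  (isCompact_friedrichsCosSet A B).sSup_mem h

theorem friedrichsCos_lt_one (A B : Submodule ℝ E) : friedrichsCos A B < 1 := by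
  rcases (friedrichsCosSet A B).eq_empty_or_nonempty with h | hne
  · rw [friedrichsCos_eq_sSup, h, Real.sSup_empty]; exact one_pos
  obtain ⟨u, v, hu, hv, hu1, hv1, hc⟩ := friedrichsCos_mem_friedrichsCosSet hne
  have hle : ⟪u, v⟫ ≤ 1 := by simpa [hu1, hv1] using real_inner_le_norm u v
  refine hc ▸ hle.lt_of_ne fun h1 => ?_
  -- equality in Cauchy–Schwarz forces `u = v ∈ A ⊓ B`, but `u ⊥ A ⊓ B`
  rw [inner_eq_one_iff_of_norm_eq_one hu1 hv1] at h1
  subst h1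
  have h0 : ⟪u, u⟫ = 0 := hu.2 u ⟨hu.1, hv.1⟩
  rw [real_inner_self_eq_norm_sq, hu1] at h0
  norm_num at h0

theorem friedrichsCos_orthogonal_le (A B : Submodule ℝ E) :
    friedrichsCos Aᗮ Bᗮ ≤ friedrichsCos A B := by
  rcases (friedrichsCosSet Aᗮ Bᗮ).eq_empty_or_nonempty with h | hne
  · rw [friedrichsCos_eq_sSup Aᗮ, h, Real.sSup_empty]; exact friedrichsCos_nonneg A B
  set c := friedrichsCos Aᗮ Bᗮ
  obtain ⟨u, v, hu, hv, hu1, hv1, hc⟩ := friedrichsCos_mem_friedrichsCosSet hne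
  have huv : ⟪u, v⟫ = c := hc.symm
  -- an extremal pair `(u, v)` for `(Aᗮ, Bᗮ)` yields the pair `(c • u - v, u - c • v)` for `(A, B)`
  have hPu : Bᗮ.starProjection u = c • v := starProjection_eq_friedrichsCos_smul hu hv hu1 hv1 huv
  have hPv : Aᗮ.starProjection v = c • u := by
    rw [inf_comm Aᗮ Bᗮ] at hu hv
    have := starProjection_eq_friedrichsCos_smul hv hu hv1 hu1
      (by rw [real_inner_comm, huv]; exact friedrichsCos_comm _ _)
    rwa [friedrichsCos_comm] at this
  have ha : c • u - v ∈ A := by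
    rw [← neg_sub]
    refine neg_mem ?_
    simpa only [hPv, A.orthogonal_orthogonal] using Aᗮ.sub_starProjection_mem_orthogonal v
  have hb : u - c • v ∈ B := by
    simpa only [hPu, B.orthogonal_orthogonal] using Bᗮ.sub_starProjection_mem_orthogonal u
  have huW : u ∈ (A ⊓ B)ᗮ := Submodule.orthogonal_le inf_le_left hu.1
  have hvW : v ∈ (A ⊓ B)ᗮ := Submodule.orthogonal_le inf_le_right hv.1
  have hle := inner_le_friedrichsCos_mul (A := A) (B := B)
    ⟨ha, sub_mem (Submodule.smul_mem _ c huW) hvW⟩ ⟨hb, sub_mem huW (Submodule.smul_mem _ c hvW)⟩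
  have hc2 : 0 < 1 - c ^ 2 := by
    nlinarith [friedrichsCos_nonneg Aᗮ Bᗮ, friedrichsCos_lt_one Aᗮ Bᗮ]
  rw [inner_smul_sub_sub_smul hu1 hv1 huv, norm_smul_sub_mul_norm_sub_smul hu1 hv1 huv] at hle
  exact le_of_mul_le_mul_right hle hc2

end FriedrichsCosFiniteDimensional

theorem norm_one_sub_smul_add_smul_sq {F : Type*} [NormedAddCommGroup F] [InnerProductSpace ℝ F]
    {x y : F} (h : ⟪x, y⟫ = ‖y‖ ^ 2) (l : ℝ) :
    ‖(1 - l) • x + l • y‖ ^ 2 = (1 - l) ^ 2 * ‖x‖ ^ 2 + l * (2 - l) * ‖y‖ ^ 2 := by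
  rw [norm_add_sq_real, real_inner_smul_left, real_inner_smul_right, h, norm_smul, norm_smul,
    mul_pow, mul_pow, Real.norm_eq_abs, Real.norm_eq_abs, sq_abs, sq_abs]
  ring

section DouglasRachford

variable {E : Type*} [NormedAddCommGroup E] [InnerProductSpace ℝ E]
  (T₁ T₂ : Submodule ℝ E) [T₁.HasOrthogonalProjection] [T₂.HasOrthogonalProjection]

noncomputable def douglasRachfordOp : E →L[ℝ] E :=
  T₁.starProjection ∘L T₂.starProjection + T₁ᗮ.starProjection ∘L T₂ᗮ.starProjection

theorem douglasRachfordOp_apply (x : E) : douglasRachfordOp T₁ T₂ x =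
    T₁.starProjection (T₂.starProjection x) + T₁ᗮ.starProjection (T₂ᗮ.starProjection x) := rfl

theorem norm_douglasRachfordOp_apply_sq (x : E) : ‖douglasRachfordOp T₁ T₂ x‖ ^ 2 =
    ‖T₁.starProjection (T₂.starProjection x)‖ ^ 2 +
      ‖T₁ᗮ.starProjection (T₂ᗮ.starProjection x)‖ ^ 2 := by
  rw [douglasRachfordOp_apply, sq, sq, sq]
  exact norm_add_sq_eq_norm_sq_add_norm_sq_of_inner_eq_zero _ _
    (T₁.inner_right_of_mem_orthogonal (T₁.starProjection_apply_mem _)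
      (T₁ᗮ.starProjection_apply_mem _))

theorem real_inner_self_douglasRachfordOp (x : E) :
    ⟪x, douglasRachfordOp T₁ T₂ x⟫ = ‖douglasRachfordOp T₁ T₂ x‖ ^ 2 := by
  rw [norm_douglasRachfordOp_apply_sq, douglasRachfordOp_apply]
  set s := T₂.starProjection x
  set t := T₂ᗮ.starProjection x
  have hx : x = s + t := (T₂.starProjection_add_starProjection_orthogonal x).symm
  have hst : ⟪s, t⟫ = 0 :=
    T₂.inner_right_of_mem_orthogonal (T₂.starProjection_apply_mem x)
      (T₂ᗮ.starProjection_apply_mem x)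
  have hcross : ⟪t, T₁.starProjection s⟫ + ⟪s, T₁ᗮ.starProjection t⟫ = 0 := by
    rw [← T₁.inner_starProjection_left_eq_right, real_inner_comm, ← inner_add_right,
      T₁.starProjection_add_starProjection_orthogonal, hst]
  rw [← T₁.real_inner_self_starProjection s, ← T₁ᗮ.real_inner_self_starProjection t]
  conv_lhs => rw [hx]
  rw [inner_add_left, inner_add_right, inner_add_right]
  linarith

theorem douglasRachfordOp_apply_of_mem_sup {x : E} (hx : x ∈ (T₁ ⊓ T₂) ⊔ (T₁ᗮ ⊓ T₂ᗮ)) :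
    douglasRachfordOp T₁ T₂ x = x := by
  obtain ⟨w, hw, w', hw', rfl⟩ := Submodule.mem_sup.1 hx
  simp only [map_add, douglasRachfordOp_apply,
    T₂.starProjection_eq_self_iff.2 hw.2, T₁.starProjection_eq_self_iff.2 hw.1,
    T₂ᗮ.starProjection_eq_self_iff.2 hw'.2, T₁ᗮ.starProjection_eq_self_iff.2 hw'.1,
    T₂.starProjection_orthogonal_apply_eq_zero hw.2, T₂.starProjection_apply_eq_zero_iff.2 hw'.2,
    map_zero]
  abel

end DouglasRachford

section DouglasRachfordFiniteDimensional

variable {E : Type*} [NormedAddCommGroup E] [InnerProductSpace ℝ E] [FiniteDimensional ℝ E]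
  (T₁ T₂ : Submodule ℝ E)

theorem norm_douglasRachfordOp_apply_le {x : E} (hx : x ∈ ((T₁ ⊓ T₂) ⊔ (T₁ᗮ ⊓ T₂ᗮ))ᗮ) :
    ‖douglasRachfordOp T₁ T₂ x‖ ≤ friedrichsCos T₁ T₂ * ‖x‖ := by
  set c := friedrichsCos T₁ T₂
  have h₁ : ‖T₁.starProjection (T₂.starProjection x)‖ ≤ c * ‖T₂.starProjection x‖ :=
    norm_starProjection_le_friedrichsCos_mul ⟨T₂.starProjection_apply_mem x,
      Submodule.starProjection_mem_orthogonal_of_le inf_le_right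
        (Submodule.orthogonal_le le_sup_left hx)⟩
  have h₂ : ‖T₁ᗮ.starProjection (T₂ᗮ.starProjection x)‖ ≤ c * ‖T₂ᗮ.starProjection x‖ :=
    (norm_starProjection_le_friedrichsCos_mul ⟨T₂ᗮ.starProjection_apply_mem x,
      Submodule.starProjection_mem_orthogonal_of_le inf_le_right
        (Submodule.orthogonal_le le_sup_right hx)⟩).trans
      (mul_le_mul_of_nonneg_right (friedrichsCos_orthogonal_le T₁ T₂) (norm_nonneg _))
  have hsq : ‖douglasRachfordOp T₁ T₂ x‖ ^ 2 ≤ (c * ‖x‖) ^ 2 := by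
    rw [norm_douglasRachfordOp_apply_sq, mul_pow, T₂.norm_sq_eq_add_norm_sq_starProjection x,
      mul_add, ← mul_pow, ← mul_pow]
    gcongr
  exact (pow_le_pow_iff_left₀ (norm_nonneg _)
    (mul_nonneg (friedrichsCos_nonneg T₁ T₂) (norm_nonneg x)) two_ne_zero).1 hsq

theorem norm_relaxed_douglasRachfordOp_sub_starProjection_apply_le {l : ℝ} (hl₀ : 0 ≤ l)
    (hl₂ : l ≤ 2) (v : E) :
    ‖((1 - l) • (1 : E →L[ℝ] E) + l • douglasRachfordOp T₁ T₂ -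
        ((T₁ ⊓ T₂) ⊔ (T₁ᗮ ⊓ T₂ᗮ)).starProjection) v‖ ≤
      √((1 - l) ^ 2 + l * (2 - l) * friedrichsCos T₁ T₂ ^ 2) * ‖v‖ := by
  set F := (T₁ ⊓ T₂) ⊔ (T₁ᗮ ⊓ T₂ᗮ)
  set M := douglasRachfordOp T₁ T₂
  set c := friedrichsCos T₁ T₂
  set p := F.starProjection v
  set q := Fᗮ.starProjection v
  -- `M` fixes the `F`-component of `v`, so only the `Fᗮ`-component survives
  have himage : ((1 - l) • (1 : E →L[ℝ] E) + l • M - F.starProjection) v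
      = (1 - l) • q + l • M q := by
    have hv : v = p + q := (F.starProjection_add_starProjection_orthogonal v).symm
    have hMv : M v = p + M q := by
      conv_lhs => rw [hv]
      rw [map_add, douglasRachfordOp_apply_of_mem_sup T₁ T₂ (F.starProjection_apply_mem v)]
    simp only [sub_apply, add_apply, smul_apply, one_apply_eq_self]
    rw [hMv, show F.starProjection v = p from rfl, hv]
    module
  have hMq : ‖M q‖ ≤ c * ‖q‖ :=
    norm_douglasRachfordOp_apply_le T₁ T₂ (Fᗮ.starProjection_apply_mem v)
  have hqv : ‖q‖ ≤ ‖v‖ := Fᗮ.norm_starProjection_apply_le v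
  have hsq : ‖(1 - l) • q + l • M q‖ ^ 2 ≤ ((1 - l) ^ 2 + l * (2 - l) * c ^ 2) * ‖v‖ ^ 2 := by
    rw [norm_one_sub_smul_add_smul_sq (real_inner_self_douglasRachfordOp T₁ T₂ q)]
    have hl : 0 ≤ l * (2 - l) := mul_nonneg hl₀ (by linarith)
    calc (1 - l) ^ 2 * ‖q‖ ^ 2 + l * (2 - l) * ‖M q‖ ^ 2
        ≤ (1 - l) ^ 2 * ‖q‖ ^ 2 + l * (2 - l) * (c * ‖q‖) ^ 2 := by gcongr
      _ = ((1 - l) ^ 2 + l * (2 - l) * c ^ 2) * ‖q‖ ^ 2 := by ring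
      _ ≤ ((1 - l) ^ 2 + l * (2 - l) * c ^ 2) * ‖v‖ ^ 2 := by gcongr
  rw [himage, ← Real.sqrt_sq (norm_nonneg v), ← Real.sqrt_mul' _ (sq_nonneg _)]
  exact Real.le_sqrt_of_sq_le hsq

end DouglasRachfordFiniteDimensional

theorem sqrt_one_sub_sq_add_mul_sq_lt_one {l c : ℝ} (hl₀ : 0 < l) (hl₂ : l < 2) (hc : c ^ 2 < 1) :
    √((1 - l) ^ 2 + l * (2 - l) * c ^ 2) < 1 := by
  rw [Real.sqrt_lt' one_pos]
  nlinarith [mul_pos hl₀ (sub_pos.2 hl₂)]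

theorem norm_sub_le_pow_mul_of_contraction {F : Type*} [SeminormedAddCommGroup F] {A : F → F}
    {ρ : ℝ} (hρ : 0 ≤ ρ) (hA : ∀ x, ‖A x‖ ≤ ρ * ‖x‖) {z : ℕ → F} {zs : F} {K : ℕ}
    (hrec : ∀ k, K ≤ k → z (k + 1) - zs = A (z k - zs)) :
    ∀ k, K ≤ k → ‖z k - zs‖ ≤ ρ ^ (k - K) * ‖z K - zs‖ := by
  intro k hk
  obtain ⟨n, rfl⟩ := Nat.exists_eq_add_of_le hk
  rw [Nat.add_sub_cancel_left]
  refine le_geom (u := fun n => ‖z (K + n) - zs‖) hρ n fun j _ => ?_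
  simpa only [← add_assoc, hrec (K + j) (Nat.le_add_right K j)] using hA (z (K + j) - zs)

/-- Optimal local linear convergence of stationary Douglas–Rachford in the polyhedral
case: a sequence evolving by `z_{k+1} − z* = (M_λ − M^∞)(z_k − z*)` converges linearly
with rate `√((1−λ)² + λ(2−λ) c_F²) < 1`. -/
theorem polyhedral_DR_local_linear_convergence {E : Type*} [NormedAddCommGroup E]
    [InnerProductSpace ℝ E] [FiniteDimensional ℝ E]
    (T₁ T₂ : Submodule ℝ E)
    (M : E →L[ℝ] E)
    (hM : M = (projCLM T₁).comp (projCLM T₂) + (projCLM T₁ᗮ).comp (projCLM T₂ᗮ))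
    {l : ℝ} (hl : l ∈ Set.Ioo (0 : ℝ) 2)
    (Ml : E →L[ℝ] E) (hMl : Ml = (1 - l) • (1 : E →L[ℝ] E) + l • M)
    (Minf : E →L[ℝ] E) (hMinf : Minf = projCLM ((T₁ ⊓ T₂) ⊔ (T₁ᗮ ⊓ T₂ᗮ)))
    (cF : ℝ) (hcF : cF = friedrichsCos T₂ T₁)
    (ρ : ℝ) (hρ : ρ = Real.sqrt ((1 - l) ^ 2 + l * (2 - l) * cF ^ 2))
    (z : ℕ → E) (zs : E) (K : ℕ)
    (hrec : ∀ k, K ≤ k → z (k + 1) - zs = (Ml - Minf) (z k - zs)) :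
    ρ < 1 ∧ ∀ k, K ≤ k → ‖z k - zs‖ ≤ ρ ^ (k - K) * ‖z K - zs‖ := by
  obtain ⟨hl₀, hl₂⟩ := hl
  rw [friedrichsCos_comm] at hcF
  have hcF_sq : cF ^ 2 < 1 := hcF ▸
    pow_lt_one₀ (friedrichsCos_nonneg T₁ T₂) (friedrichsCos_lt_one T₁ T₂) two_ne_zero
  have hcontr : ∀ v, ‖(Ml - Minf) v‖ ≤ ρ * ‖v‖ := by
    subst hM hMl hMinf hcF hρ
    exact norm_relaxed_douglasRachfordOp_sub_starProjection_apply_le T₁ T₂ hl₀.le hl₂.le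
  refine ⟨hρ ▸ sqrt_one_sub_sq_add_mul_sq_lt_one hl₀ hl₂ hcF_sq, ?_⟩
  exact norm_sub_le_pow_mul_of_contraction (hρ ▸ Real.sqrt_nonneg _) hcontr hrec
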